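/- arXiv:1904.02943 — 8 statements merged into one kernel-verified Lean document; each statement's English description precedes it below -/
import Mathlib

section
/- Let α > 0, let A be a finite set of m×m matrices with nonnegative real entries, let v ∈ (ℝ≥0)^m, and let X ⊆ (ℝ≥0)^m be a bounded set of vectors such that v ∈ conv(X) and for every x ∈ X and M ∈ A, (1/α)·M·x ∈ conv(X). Then for every p ∈ (ℝ≥0)^m there is a constant C such that for all n and every sequence M₁,…,Mₙ of matrices in A, |p · (M₁⋯Mₙ · v)| < C·αⁿ. -/
/-!
Since `x ↦ α⁻¹ • M x` sends `X` into the convex set `conv X`, it sends all of `conv X` into itself,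
so by induction `α⁻ⁿ • (M₁ ⋯ Mₙ v) ∈ conv X`. The hull of a bounded set is bounded, so the
functional `p ⬝ᵥ ·` is bounded on it by some `C`, and rescaling gives `|p ⬝ᵥ M₁ ⋯ Mₙ v| < C αⁿ`.
-/

open Matrix Set

theorem convexHull_mapsTo_self_of_mapsTo {𝕜 E : Type*} [Semiring 𝕜] [PartialOrder 𝕜]
    [AddCommMonoid E] [Module 𝕜 E] (f : E →ₗ[𝕜] E) {s : Set E}
    (h : MapsTo f s (convexHull 𝕜 s)) : MapsTo f (convexHull 𝕜 s) (convexHull 𝕜 s) :=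
  convexHull_min h ((convex_convexHull 𝕜 s).linear_preimage f)

theorem Bornology.IsBounded.exists_abs_lt_of_continuous {E : Type*} [PseudoMetricSpace E]
    [ProperSpace E] {K : Set E} (hK : IsBounded K) {f : E → ℝ} (hf : Continuous f) :
    ∃ C, ∀ y ∈ K, |f y| < C := by
  obtain ⟨C, hC⟩ := ((hK.isCompact_closure.image hf).isBounded.subset
    (image_mono subset_closure)).exists_norm_le
  exact ⟨C + 1, fun y hy => (hC _ (mem_image_of_mem f hy)).trans_lt (lt_add_one C)⟩

theorem Matrix.pow_length_smul_prod_mulVec_mem {n R : Type*} [Fintype n] [DecidableEq n]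
    [CommSemiring R] {K : Set (n → R)} {A : Set (Matrix n n R)} {c : R}
    (hA : ∀ M ∈ A, MapsTo (fun x => c • (M *ᵥ x)) K K) {v : n → R} (hv : v ∈ K) :
    ∀ L : List (Matrix n n R), (∀ M ∈ L, M ∈ A) → c ^ L.length • (L.prod *ᵥ v) ∈ K
  | [], _ => by simpa using hv
  | M :: L, hL => by
    have hrec : c • (M *ᵥ _) ∈ K := hA M (hL M List.mem_cons_self)
      (pow_length_smul_prod_mulVec_mem hA hv L fun N hN => hL N (List.mem_cons_of_mem M hN))
    rwa [mulVec_smul, smul_smul, mulVec_mulVec, ← pow_succ', ← List.length_cons,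
      ← List.prod_cons] at hrec

theorem convexHull_matrix_bound_general (m : ℕ) (α : ℝ) (hα : 0 < α)
    (A : Finset (Matrix (Fin m) (Fin m) ℝ))
    (v : Fin m → ℝ)
    (X : Set (Fin m → ℝ))
    (hXbdd : Bornology.IsBounded X)
    (hvX : v ∈ convexHull ℝ X)
    (hstep : ∀ x ∈ X, ∀ M ∈ A, α⁻¹ • (M *ᵥ x) ∈ convexHull ℝ X)
    (p : Fin m → ℝ) :
    ∃ C : ℝ, ∀ (n : ℕ) (M : Fin n → Matrix (Fin m) (Fin m) ℝ),
      (∀ i, M i ∈ A) → |p ⬝ᵥ ((List.ofFn M).prod *ᵥ v)| < C * α ^ n := by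
  have hhull : ∀ M ∈ (A : Set _),
      MapsTo (fun x => α⁻¹ • (M *ᵥ x)) (convexHull ℝ X) (convexHull ℝ X) := fun M hM =>
    convexHull_mapsTo_self_of_mapsTo (α⁻¹ • M.mulVecLin) fun x hx => hstep x hx M hM
  obtain ⟨C, hC⟩ := (isBounded_convexHull.2 hXbdd).exists_abs_lt_of_continuous
    (f := (p ⬝ᵥ ·)) (by fun_prop)
  refine ⟨C, fun n M hM => ?_⟩
  have hmem := pow_length_smul_prod_mulVec_mem hhull hvX (List.ofFn M)
    (by simpa [List.mem_ofFn] using hM)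
  rw [List.length_ofFn] at hmem
  have hαn : 0 < α ^ n := pow_pos hα n
  calc |p ⬝ᵥ ((List.ofFn M).prod *ᵥ v)|
      = α ^ n * |p ⬝ᵥ (α⁻¹ ^ n • ((List.ofFn M).prod *ᵥ v))| := by
        rw [dotProduct_smul, smul_eq_mul, abs_mul, abs_of_pos (pow_pos (inv_pos.2 hα) n),
          ← mul_assoc, ← mul_pow, mul_inv_cancel₀ hα.ne', one_pow, one_mul]
    _ < α ^ n * C := mul_lt_mul_of_pos_left (hC _ hmem) hαn
    _ = C * α ^ n := mul_comm _ _

theorem convexHull_matrix_bound (m : ℕ) (α : ℝ) (hα : 0 < α)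
    (A : Finset (Matrix (Fin m) (Fin m) ℝ))
    (hA : ∀ M ∈ A, ∀ i j, 0 ≤ M i j)
    (v : Fin m → ℝ) (hv : ∀ i, 0 ≤ v i)
    (X : Set (Fin m → ℝ)) (hXnn : ∀ x ∈ X, ∀ i, 0 ≤ x i)
    (hXbdd : Bornology.IsBounded X)
    (hvX : v ∈ convexHull ℝ X)
    (hstep : ∀ x ∈ X, ∀ M ∈ A, α⁻¹ • (M *ᵥ x) ∈ convexHull ℝ X)
    (p : Fin m → ℝ) (hp : ∀ i, 0 ≤ p i) :
    ∃ C : ℝ, ∀ (n : ℕ) (M : Fin n → Matrix (Fin m) (Fin m) ℝ),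
      (∀ i, M i ∈ A) → |p ⬝ᵥ ((List.ofFn M).prod *ᵥ v)| < C * α ^ n :=
  convexHull_matrix_bound_general m α hα A v X hXbdd hvX hstep p
end

section
/- Let α > 0, let A be a finite set of m×m matrices with nonnegative real entries, let v ∈ (ℝ≥0)^m, and let X ⊆ (ℝ≥0)^m be a bounded set such that v ∈ conv≤(X) and for every x ∈ X and M ∈ A, (1/α)·M·x ∈ conv≤(X), where conv≤(X) = {y ∈ (ℝ≥0)^m : ∃ y' ∈ conv(X), y ≤ y' coordinatewise}. Then for every p ∈ (ℝ≥0)^m there exists C such that for all n and all M₁,…,Mₙ ∈ A, p · (M₁⋯Mₙ · v) < C·αⁿ. -/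
open Matrix

/-- `conv≤(X)`: nonnegative vectors dominated coordinatewise by some point of the
convex hull of `X`. -/
def convLe (m : ℕ) (X : Set (Fin m → ℝ)) : Set (Fin m → ℝ) :=
  {y | (∀ i, 0 ≤ y i) ∧ ∃ y' ∈ convexHull ℝ X, ∀ i, y i ≤ y' i}

/-! The renormalised vectors `α⁻ⁿ • (M₁ ⋯ Mₙ *ᵥ v)` all stay in `conv≤(X)`: this set is convex and
downward closed, so a monotone linear map sending `X` into it sends all of it into itself, and
`y ↦ α⁻¹ • (M *ᵥ y)` is such a map for `M ∈ A`. Since `X` is bounded so is `conv≤(X)`, hence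
`p ⬝ᵥ ·` is bounded on it, and scaling back by `αⁿ` gives the bound. -/

section

variable {m : ℕ} {X : Set (Fin m → ℝ)}

lemma convex_convLe : Convex ℝ (convLe m X) := by
  rintro y ⟨hy0, y', hy', hyy'⟩ z ⟨hz0, z', hz', hzz'⟩ a b ha hb hab
  refine ⟨fun i => add_nonneg (mul_nonneg ha (hy0 i)) (mul_nonneg hb (hz0 i)), a • y' + b • z',
    convex_convexHull ℝ X hy' hz' ha hb hab, fun i => ?_⟩
  simp only [Pi.add_apply, Pi.smul_apply, smul_eq_mul]
  gcongr
  exacts [hyy' i, hzz' i]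

lemma convLe_of_le {y z : Fin m → ℝ} (hy : 0 ≤ y) (hyz : y ≤ z) (hz : z ∈ convLe m X) :
    y ∈ convLe m X :=
  let ⟨_, z', hz', hzz'⟩ := hz
  ⟨hy, z', hz', fun i => (hyz i).trans (hzz' i)⟩

lemma mapsTo_convLe_of_monotone {f : (Fin m → ℝ) →ₗ[ℝ] (Fin m → ℝ)} (hf : Monotone f)
    (hfX : Set.MapsTo f X (convLe m X)) : Set.MapsTo f (convLe m X) (convLe m X) := by
  rintro y ⟨hy0, y', hy', hyy'⟩
  have hull_sub : convexHull ℝ X ⊆ f ⁻¹' convLe m X :=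
    convexHull_min hfX (convex_convLe.linear_preimage f)
  refine convLe_of_le ?_ (hf hyy') (hull_sub hy')
  simpa using hf (show 0 ≤ y from hy0)

lemma isBounded_convLe (hX : Bornology.IsBounded X) : Bornology.IsBounded (convLe m X) := by
  obtain ⟨b, hb⟩ := (isBounded_convexHull.2 hX).bddAbove
  refine (Metric.isBounded_Icc 0 b).subset fun y ⟨hy0, y', hy', hyy'⟩ => ⟨hy0, ?_⟩
  exact fun i => (hyy' i).trans (hb hy' i)

end

lemma Matrix.monotone_mulVec {l n R : Type*} [Fintype n] [Semiring R] [PartialOrder R]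
    [IsOrderedRing R] {M : Matrix l n R} (hM : ∀ i j, 0 ≤ M i j) : Monotone M.mulVec := fun _ _ hxy i =>
  Finset.sum_le_sum fun j _ => mul_le_mul_of_nonneg_left (hxy j) (hM i j)

lemma Bornology.IsBounded.exists_dotProduct_lt {n : Type*} [Fintype n] {S : Set (n → ℝ)}
    (hS : Bornology.IsBounded S) (p : n → ℝ) : ∃ C, ∀ y ∈ S, p ⬝ᵥ y < C := by
  obtain ⟨C, hC⟩ := (hS.isCompact_closure.bddAbove_image
    (continuous_const.dotProduct continuous_id).continuousOn).mono (Set.image_mono subset_closure)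
  exact ⟨C + 1, fun y hy => (hC ⟨y, hy, rfl⟩).trans_lt (lt_add_one C)⟩

lemma inv_pow_smul_prod_mulVec_mem {n K : Type*} [Fintype n] [DecidableEq n] [Field K]
    {α : K} {A : Set (Matrix n n K)} {S : Set (n → K)}
    (hS : ∀ M ∈ A, ∀ y ∈ S, α⁻¹ • (M *ᵥ y) ∈ S) {v : n → K} (hv : v ∈ S) :
    ∀ (k : ℕ) (M : Fin k → Matrix n n K), (∀ i, M i ∈ A) →
      (α ^ k)⁻¹ • ((List.ofFn M).prod *ᵥ v) ∈ S
  | 0, _, _ => by simpa using hv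
  | k + 1, M, hM => by
    have := hS _ (hM 0) _ (inv_pow_smul_prod_mulVec_mem hS hv k _ fun i => hM i.succ)
    rwa [mulVec_smul, smul_smul, mulVec_mulVec, ← mul_inv, ← pow_succ', ← List.prod_cons,
      ← List.ofFn_succ] at this

theorem convLe_matrix_bound_general (m : ℕ) (α : ℝ) (hα : 0 < α)
    (A : Finset (Matrix (Fin m) (Fin m) ℝ))
    (hA : ∀ M ∈ A, ∀ i j, 0 ≤ M i j)
    (v : Fin m → ℝ)
    (X : Set (Fin m → ℝ))
    (hXbdd : Bornology.IsBounded X)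
    (hvX : v ∈ convLe m X)
    (hstep : ∀ x ∈ X, ∀ M ∈ A, α⁻¹ • (M *ᵥ x) ∈ convLe m X)
    (p : Fin m → ℝ) :
    ∃ C : ℝ, ∀ (n : ℕ) (M : Fin n → Matrix (Fin m) (Fin m) ℝ),
      (∀ i, M i ∈ A) → p ⬝ᵥ ((List.ofFn M).prod *ᵥ v) < C * α ^ n := by
  have hinvariant : ∀ M ∈ (A : Set _), ∀ y ∈ convLe m X, α⁻¹ • (M *ᵥ y) ∈ convLe m X :=
    fun M hM => mapsTo_convLe_of_monotone (f := α⁻¹ • M.mulVecLin)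
      ((monotone_mulVec (hA M hM)).const_smul (inv_nonneg.2 hα.le)) fun x hx => hstep x hx M hM
  obtain ⟨C, hC⟩ := (isBounded_convLe hXbdd).exists_dotProduct_lt p
  refine ⟨C, fun n M hM => ?_⟩
  have hlt := hC _ (inv_pow_smul_prod_mulVec_mem hinvariant hvX n M hM)
  rwa [dotProduct_smul, smul_eq_mul, inv_mul_lt_iff₀ (pow_pos hα n), mul_comm] at hlt

theorem convLe_matrix_bound (m : ℕ) (α : ℝ) (hα : 0 < α)
    (A : Finset (Matrix (Fin m) (Fin m) ℝ))
    (hA : ∀ M ∈ A, ∀ i j, 0 ≤ M i j)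
    (v : Fin m → ℝ) (hv : ∀ i, 0 ≤ v i)
    (X : Set (Fin m → ℝ)) (hXnn : ∀ x ∈ X, ∀ i, 0 ≤ x i)
    (hXbdd : Bornology.IsBounded X)
    (hvX : v ∈ convLe m X)
    (hstep : ∀ x ∈ X, ∀ M ∈ A, α⁻¹ • (M *ᵥ x) ∈ convLe m X)
    (p : Fin m → ℝ) (hp : ∀ i, 0 ≤ p i) :
    ∃ C : ℝ, ∀ (n : ℕ) (M : Fin n → Matrix (Fin m) (Fin m) ℝ),
      (∀ i, M i ∈ A) → p ⬝ᵥ ((List.ofFn M).prod *ᵥ v) < C * α ^ n :=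
  convLe_matrix_bound_general m α hα A hA v X hXbdd hvX hstep p
end

section
/- Let G be a graph and D a (σ,ρ)-dominating set of G. Define the set of certificates C = {v ∈ D : |N(v) ∩ D| - 1 ∉ σ} ∪ {v ∉ D : |N(v) ∩ D| - 1 ∉ ρ}. Then D is 1-minimal (i.e., for every u ∈ D, D \ {u} is not a (σ,ρ)-dominating set) if and only if every vertex v ∈ D either satisfies |N(v) ∩ D| ∉ ρ (is self-certified) or has a neighbor in C. -/
/-- `D` is a `(σ,ρ)`-dominating set of `G`. -/
def IsSigmaRhoDom (σ ρ : Set ℕ) {V : Type*} (G : SimpleGraph V) (D : Set V) : Prop :=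
  ∀ v : V, (v ∈ D → (G.neighborSet v ∩ D).ncard ∈ σ) ∧
    (v ∉ D → (G.neighborSet v ∩ D).ncard ∈ ρ)

lemma inter_diff_card {V : Type*} [Fintype V] (G : SimpleGraph V) (D : Set V) {u w : V}
    (hu : u ∈ D) (h : G.Adj w u) :
    (G.neighborSet w ∩ (D \ {u})).ncard + 1 = (G.neighborSet w ∩ D).ncard := by
  have hset : G.neighborSet w ∩ (D \ {u}) = (G.neighborSet w ∩ D) \ {u} := by
    ext x; simp [Set.mem_diff]; tauto
  rw [hset]
  exact Set.ncard_diff_singleton_add_one ⟨h, hu⟩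

lemma inter_diff_eq {V : Type*} (G : SimpleGraph V) (D : Set V) {u w : V}
    (h : ¬ (G.Adj w u ∧ u ∈ D)) :
    G.neighborSet w ∩ (D \ {u}) = G.neighborSet w ∩ D := by
  ext x; simp only [Set.mem_inter_iff, Set.mem_diff, Set.mem_singleton_iff,
    SimpleGraph.mem_neighborSet]
  constructor
  · tauto
  · rintro ⟨hx, hxD⟩
    refine ⟨hx, hxD, ?_⟩
    rintro rfl; exact h ⟨hx, hxD⟩

theorem one_minimal_iff_certificates (σ ρ : Set ℕ) {V : Type*} [Fintype V]
    (G : SimpleGraph V) (D : Set V) (hD : IsSigmaRhoDom σ ρ G D)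
    -- the set of certificates: vertices that would not be properly dominated
    -- after losing one neighbor in `D` (in particular when `|N(v) ∩ D| = 0`)
    (C : Set V)
    (hC : C = {v : V | (v ∈ D ∧ ¬ ∃ k ∈ σ, (G.neighborSet v ∩ D).ncard = k + 1) ∨
      (v ∉ D ∧ ¬ ∃ k ∈ ρ, (G.neighborSet v ∩ D).ncard = k + 1)}) :
    (∀ u ∈ D, ¬ IsSigmaRhoDom σ ρ G (D \ {u})) ↔
      (∀ v ∈ D, (G.neighborSet v ∩ D).ncard ∉ ρ ∨ ∃ c ∈ C, G.Adj v c) := by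
  subst hC
  constructor
  · intro h v hv
    by_contra hcon
    rw [not_or, not_not] at hcon
    obtain ⟨h1, h2⟩ := hcon
    apply h v hv
    intro w
    constructor
    · intro hw
      obtain ⟨hwD, hwv⟩ := hw
      simp only [Set.mem_singleton_iff] at hwv
      by_cases hadj : G.Adj w v
      · have hnc : ¬ (w ∈ {v : V | (v ∈ D ∧ ¬ ∃ k ∈ σ, (G.neighborSet v ∩ D).ncard = k + 1) ∨
            (v ∉ D ∧ ¬ ∃ k ∈ ρ, (G.neighborSet v ∩ D).ncard = k + 1)}) := by
          intro hwC; exact h2 ⟨w, hwC, hadj.symm⟩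
        have hex : ∃ k ∈ σ, (G.neighborSet w ∩ D).ncard = k + 1 := by
          by_contra hne; exact hnc (Or.inl ⟨hwD, hne⟩)
        obtain ⟨k, hkσ, hk⟩ := hex
        have hc := inter_diff_card G D hv hadj
        have hk2 : (G.neighborSet w ∩ (D \ {v})).ncard = k := by omega
        rw [hk2]; exact hkσ
      · rw [inter_diff_eq G D (by tauto)]
        exact (hD w).1 hwD
    · intro hw
      by_cases hwv : w = v
      · subst hwv
        rw [inter_diff_eq G D (by simp [G.irrefl])]
        exact h1
      · have hwD : w ∉ D := by
          intro hwD; exact hw ⟨hwD, hwv⟩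
        by_cases hadj : G.Adj w v
        · have hnc : ¬ (w ∈ {v : V | (v ∈ D ∧ ¬ ∃ k ∈ σ, (G.neighborSet v ∩ D).ncard = k + 1) ∨
              (v ∉ D ∧ ¬ ∃ k ∈ ρ, (G.neighborSet v ∩ D).ncard = k + 1)}) := by
            intro hwC; exact h2 ⟨w, hwC, hadj.symm⟩
          have hex : ∃ k ∈ ρ, (G.neighborSet w ∩ D).ncard = k + 1 := by
            by_contra hne; exact hnc (Or.inr ⟨hwD, hne⟩)
          obtain ⟨k, hkρ, hk⟩ := hex
          have hc := inter_diff_card G D hv hadj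
          have hk2 : (G.neighborSet w ∩ (D \ {v})).ncard = k := by omega
          rw [hk2]; exact hkρ
        · rw [inter_diff_eq G D (by tauto)]
          exact (hD w).2 hwD
  · intro h u hu hdom
    rcases h u hu with hself | ⟨c, hcC, hadj⟩
    · have := (hdom u).2 (by simp)
      rw [inter_diff_eq G D (by simp [G.irrefl])] at this
      exact hself this
    · have hcu : c ≠ u := by rintro rfl; exact G.irrefl hadj
      have hcard := inter_diff_card G D hu hadj.symm
      simp only [Set.mem_setOf_eq] at hcC
      rcases hcC with ⟨hcD, hne⟩ | ⟨hcD, hne⟩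
      · have := (hdom c).1 ⟨hcD, by simpa using hcu⟩
        exact hne ⟨_, this, hcard.symm⟩
      · have hcnot : c ∉ D \ {u} := fun hx => hcD hx.1
        have := (hdom c).2 hcnot
        exact hne ⟨_, this, hcard.symm⟩
end

section
/- A disjoint union of k copies of K_{1,4} (the star on 5 vertices), a graph with n = 5k vertices, has exactly 4^k = 4^{n/5} total perfect dominating sets. -/
/-- Disjoint union of `k` copies of the star `K_{1,4}`: in each copy `i`,
the center `(i, 0)` is adjacent to the four leaves `(i, j)`, `j ≠ 0`. -/
def starCopies (k : ℕ) : SimpleGraph (Fin k × Fin 5) :=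
  SimpleGraph.fromRel (fun a b => a.1 = b.1 ∧ a.2 = 0)

lemma starCopies_adj {k : ℕ} (a b : Fin k × Fin 5) :
    (starCopies k).Adj a b ↔ a ≠ b ∧ a.1 = b.1 ∧ (a.2 = 0 ∨ b.2 = 0) := by
  simp only [starCopies, SimpleGraph.fromRel_adj]
  constructor
  · rintro ⟨h, h1 | h1⟩
    · exact ⟨h, h1.1, Or.inl h1.2⟩
    · exact ⟨h, h1.1.symm, Or.inr h1.2⟩
  · rintro ⟨h, h1, h2 | h2⟩
    · exact ⟨h, Or.inl ⟨h1, h2⟩⟩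
    · exact ⟨h, Or.inr ⟨h1.symm, h2⟩⟩

lemma ns_leaf {k : ℕ} (i : Fin k) (j : Fin 5) (hj : j ≠ 0) :
    (starCopies k).neighborSet (i, j) = {(i, 0)} := by
  ext ⟨a, b⟩
  simp only [SimpleGraph.mem_neighborSet, starCopies_adj, Set.mem_singleton_iff,
    Prod.mk.injEq, ne_eq, Prod.ext_iff]
  constructor
  · rintro ⟨hne, h1, h2 | h2⟩
    · exact absurd h2 hj
    · aesop
  · rintro ⟨rfl, rfl⟩
    aesop

lemma ns_center {k : ℕ} (i : Fin k) :
    (starCopies k).neighborSet (i, (0 : Fin 5)) = {w : Fin k × Fin 5 | w.1 = i ∧ w.2 ≠ 0} := by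
  ext ⟨a, b⟩
  simp only [SimpleGraph.mem_neighborSet, starCopies_adj, Set.mem_setOf_eq, ne_eq,
    Prod.ext_iff]
  constructor
  · rintro ⟨hne, h1, _⟩
    aesop
  · rintro ⟨h1, hb⟩
    aesop

theorem starCopies_total_perfect_dom (k : ℕ) :
    Fintype.card (Fin k × Fin 5) = 5 * k ∧
    Set.ncard {D : Set (Fin k × Fin 5) |
      ∀ v, ((starCopies k).neighborSet v ∩ D).ncard = 1} = 4 ^ k := by
  classical
  refine ⟨by simp [mul_comm], ?_⟩
  set g : (Fin k → {j : Fin 5 // j ≠ 0}) → Set (Fin k × Fin 5) :=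
    fun f => {v | v.2 = 0 ∨ v.2 = (f v.1).1} with hg
  have hginj : Function.Injective g := by
    intro f₁ f₂ h
    funext i
    have h1 : ((i, (f₁ i).1) : Fin k × Fin 5) ∈ g f₂ := by
      rw [← h]; exact Or.inr rfl
    rcases h1 with h1 | h1
    · exact absurd h1 (f₁ i).2
    · exact Subtype.ext h1
  have hset : {D : Set (Fin k × Fin 5) |
      ∀ v, ((starCopies k).neighborSet v ∩ D).ncard = 1} = Set.range g := by
    ext D
    simp only [Set.mem_setOf_eq, Set.mem_range]
    constructor
    · intro hD
      have hc : ∀ i : Fin k, ∃ a : Fin k × Fin 5,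
          {w : Fin k × Fin 5 | w.1 = i ∧ w.2 ≠ 0} ∩ D = {a} := by
        intro i
        have := hD (i, 0)
        rw [ns_center] at this
        exact Set.ncard_eq_one.1 this
      choose a ha using hc
      have hmem : ∀ i, a i ∈ ({w : Fin k × Fin 5 | w.1 = i ∧ w.2 ≠ 0} ∩ D) := by
        intro i; rw [ha i]; rfl
      have hcent : ∀ i : Fin k, ((i, (0 : Fin 5)) : Fin k × Fin 5) ∈ D := by
        intro i
        have h1 := hD (i, 1)
        rw [ns_leaf i 1 (by decide)] at h1
        by_contra hne
        have : ({((i, (0:Fin 5)) : Fin k × Fin 5)} ∩ D) = ∅ := by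
          ext w
          simp only [Set.mem_inter_iff, Set.mem_singleton_iff, Set.mem_empty_iff_false,
            iff_false, not_and]
          rintro rfl; exact hne
        rw [this] at h1
        simp at h1
      refine ⟨fun i => ⟨(a i).2, (hmem i).1.2⟩, ?_⟩
      ext ⟨p, q⟩
      simp only [hg, Set.mem_setOf_eq]
      by_cases hq : q = 0
      · subst hq
        simp only [true_or, true_iff]
        exact hcent p
      · simp only [hq, false_or]
        constructor
        · intro h
          have : ((p, q) : Fin k × Fin 5) = a p := by
            have h1 := (hmem p).1.1
            exact Prod.ext h1.symm h
          rw [this]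
          exact (hmem p).2
        · intro h
          have : ((p, q) : Fin k × Fin 5) ∈ ({w : Fin k × Fin 5 | w.1 = p ∧ w.2 ≠ 0} ∩ D) :=
            ⟨⟨rfl, hq⟩, h⟩
          rw [ha p] at this
          exact congrArg Prod.snd this
      -- end forward
    · rintro ⟨f, rfl⟩ ⟨i, j⟩
      by_cases hj : j = 0
      · subst hj
        rw [ns_center]
        have : {w : Fin k × Fin 5 | w.1 = i ∧ w.2 ≠ 0} ∩ g f
            = {((i, (f i).1) : Fin k × Fin 5)} := by
          ext ⟨a, b⟩
          simp only [hg, Set.mem_inter_iff, Set.mem_setOf_eq, Set.mem_singleton_iff,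
            Prod.mk.injEq, ne_eq, Prod.ext_iff]
          constructor
          · rintro ⟨⟨rfl, hb⟩, hb2 | hb2⟩
            · exact absurd hb2 hb
            · exact ⟨rfl, hb2⟩
          · rintro ⟨rfl, rfl⟩
            exact ⟨⟨rfl, (f a).2⟩, Or.inr rfl⟩
        rw [this, Set.ncard_singleton]
      · rw [ns_leaf i j hj]
        have : ({((i, (0:Fin 5)) : Fin k × Fin 5)} ∩ g f)
            = {((i, (0:Fin 5)) : Fin k × Fin 5)} := by
          rw [Set.inter_eq_left]
          rintro w rfl
          exact Or.inl rfl
        rw [this, Set.ncard_singleton]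
  rw [hset, ← Set.image_univ, Set.ncard_image_of_injective _ hginj,
    Set.ncard_univ, Nat.card_eq_fintype_card, Fintype.card_fun]
  rw [show Fintype.card {j : Fin 5 // j ≠ 0} = 4 by rfl, Fintype.card_fin]
end

section
/- For each positive integer n, let Gₙ be the spider tree with center s, legs s₁,…,s₂ₙ, edges (s, s_{2i-1}) and (s_{2i-1}, s_{2i}) for 1 ≤ i ≤ n. Then Gₙ has order 2n+1, and each choice of one vertex from each pair {s_{2i-1}, s_{2i}}, adding s exactly when all chosen vertices are the s_{2i} (leaves), yields an independent dominating set; hence Gₙ has at least 2ⁿ independent dominating sets. -/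
/-- The spider tree `Gₙ`: `none` is the center `s`, `some (i, false)` is `s_{2i-1}`
(adjacent to `s`), and `some (i, true)` is the leaf `s_{2i}` (adjacent to `s_{2i-1}`). -/
def spider (n : ℕ) : SimpleGraph (Option (Fin n × Bool)) :=
  SimpleGraph.fromRel (fun a b =>
    (a = none ∧ ∃ i : Fin n, b = some (i, false)) ∨
    (∃ i : Fin n, a = some (i, false) ∧ b = some (i, true)))

/-- `D` is an independent dominating set of `G`. -/
def IsIndepDom {V : Type*} (G : SimpleGraph V) (D : Set V) : Prop :=
  (∀ u ∈ D, ∀ v ∈ D, ¬ G.Adj u v) ∧ ∀ v ∉ D, ∃ u ∈ D, G.Adj v u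

def Dc (n : ℕ) (c : Fin n → Bool) : Set (Option (Fin n × Bool)) :=
  {x | (∃ i : Fin n, x = some (i, c i)) ∨ (x = none ∧ ∀ i : Fin n, c i = true)}

lemma Dc_key (n : ℕ) (c : Fin n → Bool) :
    ∀ u ∈ Dc n c, ∀ v ∈ Dc n c,
      ¬ ((u = none ∧ ∃ i : Fin n, v = some (i, false)) ∨
        (∃ i : Fin n, u = some (i, false) ∧ v = some (i, true))) := by
  rintro u hu v hv (⟨rfl, i, rfl⟩ | ⟨i, rfl, rfl⟩)
  · obtain (⟨j, hj⟩ | ⟨_, hall⟩) := hu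
    · simp at hj
    · obtain (⟨j, hj⟩ | ⟨h', _⟩) := hv
      · obtain ⟨rfl, hb⟩ : i = j ∧ false = c j := by simpa using hj
        have := hall i; rw [← hb] at this; simp at this
      · simp at h'
  · obtain (⟨j, hj⟩ | ⟨h', _⟩) := hu
    · obtain ⟨rfl, hb⟩ : i = j ∧ false = c j := by simpa using hj
      obtain (⟨k, hk⟩ | ⟨h'', _⟩) := hv
      · obtain ⟨rfl, hb'⟩ : i = k ∧ true = c k := by simpa using hk
        rw [← hb] at hb'; simp at hb'
      · simp at h''
    · simp at h'

lemma Dc_indep (n : ℕ) (c : Fin n → Bool) : IsIndepDom (spider n) (Dc n c) := by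
  constructor
  · rintro u hu v hv hadj
    rw [spider, SimpleGraph.fromRel_adj] at hadj
    obtain ⟨hne, h | h⟩ := hadj
    · exact Dc_key n c u hu v hv h
    · exact Dc_key n c v hv u hu h
  · rintro v hv
    match v with
    | none =>
      have : ¬ ∀ i : Fin n, c i = true := fun h => hv (Or.inr ⟨rfl, h⟩)
      push_neg at this
      obtain ⟨i, hi⟩ := this
      have hci : c i = false := by simpa using hi
      refine ⟨some (i, false), Or.inl ⟨i, by rw [hci]⟩, ?_⟩
      rw [spider, SimpleGraph.fromRel_adj]
      exact ⟨by simp, Or.inl (Or.inl ⟨rfl, i, rfl⟩)⟩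
    | some (i, b) =>
      have hb : b ≠ c i := fun h => hv (Or.inl ⟨i, by rw [h]⟩)
      refine ⟨some (i, c i), Or.inl ⟨i, rfl⟩, ?_⟩
      rw [spider, SimpleGraph.fromRel_adj]
      refine ⟨by simp [hb], ?_⟩
      cases hc : c i with
      | true =>
        have : b = false := by cases b <;> simp_all
        subst this
        exact Or.inl (Or.inr ⟨i, rfl, rfl⟩)
      | false =>
        have : b = true := by cases b <;> simp_all
        subst this
        exact Or.inr (Or.inr ⟨i, rfl, rfl⟩)

lemma Dc_inj (n : ℕ) : Function.Injective (Dc n) := by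
  intro c c' h
  funext i
  by_contra hne
  have h1 : (some (i, c i) : Option (Fin n × Bool)) ∈ Dc n c := Or.inl ⟨i, rfl⟩
  rw [h] at h1
  obtain (⟨j, hj⟩ | ⟨h', _⟩) := h1
  · obtain ⟨rfl, hb⟩ : i = j ∧ c i = c' j := by simpa using hj
    exact hne hb
  · simp at h'

theorem spider_indep_dom (n : ℕ) (hn : 0 < n) :
    Fintype.card (Option (Fin n × Bool)) = 2 * n + 1 ∧
    (∀ c : Fin n → Bool,
      IsIndepDom (spider n)
        {x : Option (Fin n × Bool) |
          (∃ i : Fin n, x = some (i, c i)) ∨ (x = none ∧ ∀ i : Fin n, c i = true)}) ∧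
    2 ^ n ≤ Set.ncard {D : Set (Option (Fin n × Bool)) | IsIndepDom (spider n) D} := by
  refine ⟨by simp [mul_comm], fun c => Dc_indep n c, ?_⟩
  have hsub : (Dc n) '' Set.univ ⊆ {D | IsIndepDom (spider n) D} := by
    rintro D ⟨c, _, rfl⟩; exact Dc_indep n c
  calc (2 : ℕ) ^ n = (Set.univ : Set (Fin n → Bool)).ncard := by
        rw [Set.ncard_univ]; simp
    _ = ((Dc n) '' Set.univ).ncard :=
        (Set.ncard_image_of_injective _ (Dc_inj n)).symm
    _ ≤ _ := Set.ncard_le_ncard hsub (Set.toFinite _)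
end

section
/- Every forest on n vertices has at most 2^{n/2} independent dominating sets, and this bound is attained by a disjoint union of n/2 edges (copies of K₂). -/
/-- The disjoint union of `k` edges (copies of `K₂`). -/
def matchingGraph (k : ℕ) : SimpleGraph (Fin k × Bool) :=
  SimpleGraph.fromRel (fun a b => a.1 = b.1)

open SimpleGraph

lemma induce_acyclic {V : Type} {G : SimpleGraph V} (h : G.IsAcyclic) (s : Set V) :
    (G.induce s).IsAcyclic := by
  intro v c hc
  exact h (c.map ⟨Subtype.val, fun hadj => hadj⟩)
    ((SimpleGraph.Walk.map_isCycle_iff_of_injective Subtype.val_injective).2 hc)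

lemma exists_leaf {V : Type} [Fintype V] {G : SimpleGraph V} (hG : G.IsAcyclic)
    {a b : V} (hab : G.Adj a b) : ∃ v u : V, G.neighborSet v = {u} := by
  classical
  by_contra h
  push_neg at h
  have key : ∀ n : ℕ, ∃ (x y : V) (p : G.Walk x y), p.IsPath ∧ n + 1 ≤ p.length := by
    intro n
    induction n with
    | zero =>
      exact ⟨a, b, .cons hab .nil, by simp [Walk.cons_isPath_iff, hab.ne], by simp⟩
    | succ n ih =>
      obtain ⟨x, y, p, hp, hlen⟩ := ih
      have hxy : y ≠ x := by
        rintro rfl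
        rw [Walk.isPath_iff_eq_nil] at hp
        simp [hp] at hlen
      obtain ⟨u, hadj, q, hq⟩ := Walk.exists_eq_cons_of_ne hxy p.reverse
      have hex : ∃ w, G.Adj y w ∧ w ≠ u := by
        by_contra h'
        push_neg at h'
        apply h y u
        ext w
        simp only [mem_neighborSet, Set.mem_singleton_iff]
        exact ⟨fun hw => h' w hw, fun hw => hw ▸ hadj⟩
      obtain ⟨w, hyw, hwu⟩ := hex
      by_cases hw : w ∈ p.support
      · exfalso
        have hq' : (⟨p.dropUntil w hw, hp.dropUntil hw⟩ : G.Path w y) = Path.singleton hyw.symm :=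
          hG.path_unique _ _
        have hq'' : p.dropUntil w hw = Walk.cons hyw.symm Walk.nil :=
          congrArg Subtype.val hq'
        have hspec := p.take_spec hw
        rw [hq''] at hspec
        have hrev : p.reverse = Walk.cons hyw ((p.takeUntil w hw).reverse) := by
          conv_lhs => rw [← hspec]
          rw [← Walk.concat_eq_append, Walk.reverse_concat]
        have hs1 : p.reverse.support = y :: q.support := by rw [hq, Walk.support_cons]
        have hs2 : p.reverse.support = y :: (p.takeUntil w hw).reverse.support := by
          rw [hrev, Walk.support_cons]
        have : q.support = (p.takeUntil w hw).reverse.support := by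
          have := hs1.symm.trans hs2
          exact List.cons.inj this |>.2
        have h1 : q.support = u :: q.support.tail := q.support_eq_cons
        have h2 : (p.takeUntil w hw).reverse.support
            = w :: (p.takeUntil w hw).reverse.support.tail :=
          Walk.support_eq_cons _
        rw [this, h2] at h1
        exact hwu (List.cons.inj h1.symm).1.symm
      · refine ⟨w, x, .cons hyw.symm p.reverse, ?_, ?_⟩
        · rw [Walk.cons_isPath_iff]
          exact ⟨hp.reverse, by rwa [Walk.support_reverse, List.mem_reverse]⟩
        · rw [Walk.length_cons, Walk.length_reverse]
          omega
  obtain ⟨x, y, p, hp, hlen⟩ := key (Fintype.card V)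
  have := hp.length_lt
  omega

lemma no_edge_case {V : Type} (G : SimpleGraph V) (h : ∀ v w, ¬ G.Adj v w) :
    {D : Set V | IsIndepDom G D} = {Set.univ} := by
  ext D
  simp only [Set.mem_setOf_eq, Set.mem_singleton_iff]
  constructor
  · rintro ⟨-, hdom⟩
    ext v
    simp only [Set.mem_univ, iff_true]
    by_contra hv
    obtain ⟨u, -, hadj⟩ := hdom v hv
    exact h v u hadj
  · rintro rfl
    exact ⟨fun u _ v _ hadj => h u v hadj, fun v hv => absurd (Set.mem_univ v) hv⟩

lemma one_le_pow_half {x : ℝ} (hx : 0 ≤ x) : (1 : ℝ) ≤ 2 ^ (x / 2) := by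
  calc (1:ℝ) = 2 ^ (0:ℝ) := (Real.rpow_zero 2).symm
  _ ≤ 2 ^ (x/2) := Real.rpow_le_rpow_of_exponent_le one_le_two (by positivity)

lemma count_le (n : ℕ) : ∀ (V : Type) [Fintype V] (G : SimpleGraph V),
    Fintype.card V ≤ n → G.IsAcyclic →
    (Set.ncard {D : Set V | IsIndepDom G D} : ℝ) ≤ 2 ^ ((Fintype.card V : ℝ) / 2) := by
  induction n with
  | zero =>
    intro V _ G hcard _
    have hemp : IsEmpty V := Fintype.card_eq_zero_iff.mp (Nat.le_zero.mp hcard)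
    rw [no_edge_case G (fun v w _ => hemp.elim v), Set.ncard_singleton]
    exact_mod_cast one_le_pow_half (by positivity)
  | succ n ih =>
    intro V _ G hcard hac
    by_cases hedge : ∃ a b, G.Adj a b
    swap
    · push_neg at hedge
      rw [no_edge_case G hedge, Set.ncard_singleton]
      exact_mod_cast one_le_pow_half (by positivity)
    obtain ⟨a, b, hab⟩ := hedge
    obtain ⟨v, u, hvu⟩ := exists_leaf hac hab
    have hadj : G.Adj v u := by
      rw [← SimpleGraph.mem_neighborSet, hvu]; exact rfl
    have hne : v ≠ u := hadj.ne
    have hnbr : ∀ w, G.Adj v w → w = u := fun w hw => by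
      have : w ∈ G.neighborSet v := hw
      rwa [hvu] at this
    have hcardV : 2 ≤ Fintype.card V := Fintype.one_lt_card_iff_nontrivial.mpr ⟨v, u, hne⟩
    set S := {D : Set V | IsIndepDom G D} with hS
    -- generic restriction bound
    have key : ∀ (s : Set V) (T : Set (Set V)),
        (∀ D ∈ T, IsIndepDom (G.induce s) (Subtype.val ⁻¹' D)) →
        Set.InjOn (fun D : Set V => (Subtype.val ⁻¹' D : Set ↥s)) T →
        Nat.card ↥s + 2 ≤ Fintype.card V →
        (T.ncard : ℝ) ≤ 2 ^ (((Fintype.card V : ℝ) - 2) / 2) := by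
      intro s T hmem hinj hcs
      have hfin : Fintype ↥s := Fintype.ofFinite _
      have hcs' : Fintype.card ↥s + 2 ≤ Fintype.card V := by
        rwa [← Nat.card_eq_fintype_card]
      have h1 : (T.ncard : ℝ)
          ≤ (Set.ncard {D' : Set ↥s | IsIndepDom (G.induce s) D'} : ℝ) := by
        have := Set.ncard_le_ncard
          (show (fun D : Set V => (Subtype.val ⁻¹' D : Set ↥s)) '' T
              ⊆ {D' : Set ↥s | IsIndepDom (G.induce s) D'} by
            rintro _ ⟨D, hD, rfl⟩; exact hmem D hD) (Set.toFinite _)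
        rw [Set.ncard_image_of_injOn hinj] at this
        exact_mod_cast this
      have h2 := ih ↥s (G.induce s) (by omega) (induce_acyclic hac s)
      refine h1.trans (h2.trans ?_)
      apply Real.rpow_le_rpow_of_exponent_le one_le_two
      have : (Fintype.card ↥s : ℝ) ≤ (Fintype.card V : ℝ) - 2 := by
        have h := (Nat.cast_le (α := ℝ)).mpr hcs'
        push_cast at h; linarith
      linarith
    classical
    have hSmem : ∀ D, D ∈ S ↔ IsIndepDom G D := fun D => Iff.rfl
    set Sv := {D ∈ S | v ∈ D} with hSv
    set Su := {D ∈ S | u ∈ D} with hSu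
    have hsplit : S ⊆ Sv ∪ Su := by
      intro D hD
      by_cases hv : v ∈ D
      · exact Or.inl ⟨hD, hv⟩
      · obtain ⟨x, hxD, hvx⟩ := hD.2 v hv
        exact Or.inr ⟨hD, (hnbr x hvx) ▸ hxD⟩
    have hbound : (S.ncard : ℝ) ≤ (Sv.ncard : ℝ) + (Su.ncard : ℝ) := by
      have h1 : S.ncard ≤ (Sv ∪ Su).ncard := Set.ncard_le_ncard hsplit (Set.toFinite _)
      have h2 := Set.ncard_union_le Sv Su
      exact_mod_cast h1.trans h2
    have hu_not : ∀ D ∈ Sv, u ∉ D := by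
      rintro D ⟨hD, hvD⟩ huD
      exact hD.1 v hvD u huD hadj
    have hvbound : (Sv.ncard : ℝ) ≤ 2 ^ (((Fintype.card V : ℝ) - 2) / 2) := by
      apply key ({v, u}ᶜ : Set V)
      · rintro D ⟨hD, hvD⟩
        constructor
        · rintro ⟨x, hx⟩ hxD ⟨y, hy⟩ hyD hadj'
          exact hD.1 x hxD y hyD hadj'
        · rintro ⟨w, hw⟩ hwD
          have hw' : w ≠ v ∧ w ≠ u := by simpa using hw
          obtain ⟨x, hxD, hwx⟩ := hD.2 w hwD
          have hxu : x ≠ u := fun h => (hu_not D ⟨hD, hvD⟩) (h ▸ hxD)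
          have hxv : x ≠ v := by
            rintro rfl
            exact hw'.2 (hnbr w hwx.symm)
          refine ⟨⟨x, ?_⟩, hxD, hwx⟩
          simp [hxv, hxu]
      · rintro D₁ ⟨hD₁, hv₁⟩ D₂ ⟨hD₂, hv₂⟩ heq
        ext x
        by_cases hxv : x = v
        · subst hxv; simp [hv₁, hv₂]
        by_cases hxu : x = u
        · subst hxu
          simp [hu_not D₁ ⟨hD₁, hv₁⟩, hu_not D₂ ⟨hD₂, hv₂⟩]
        · have hx : x ∈ ({v, u}ᶜ : Set V) := by simp [hxv, hxu]
          exact Set.ext_iff.mp heq ⟨x, hx⟩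
      · have e1 : ({v, u} : Set V).ncard + (({v, u} : Set V)ᶜ).ncard = Fintype.card V := by
          rw [Set.ncard_add_ncard_compl, Nat.card_eq_fintype_card]
        rw [Set.ncard_pair hne] at e1
        rw [Nat.card_coe_set_eq]
        omega
    have hnbru : ∀ D ∈ Su, ∀ w, G.Adj u w → w ∉ D := by
      rintro D ⟨hD, huD⟩ w hw hwD
      exact hD.1 u huD w hwD hw
    have hubound : (Su.ncard : ℝ) ≤ 2 ^ (((Fintype.card V : ℝ) - 2) / 2) := by
      apply key ((insert u (G.neighborSet u))ᶜ : Set V)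
      · rintro D ⟨hD, huD⟩
        constructor
        · rintro ⟨x, hx⟩ hxD ⟨y, hy⟩ hyD hadj'
          exact hD.1 x hxD y hyD hadj'
        · rintro ⟨w, hw⟩ hwD
          have hw' : w ≠ u ∧ ¬ G.Adj u w := by
            simpa [SimpleGraph.mem_neighborSet] using hw
          obtain ⟨x, hxD, hwx⟩ := hD.2 w hwD
          have hxu : x ≠ u := by
            rintro rfl
            exact hw'.2 hwx.symm
          have hxn : ¬ G.Adj u x := hD.1 u huD x hxD
          refine ⟨⟨x, ?_⟩, hxD, hwx⟩
          simp [hxu, hxn]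
      · rintro D₁ ⟨hD₁, hu₁⟩ D₂ ⟨hD₂, hu₂⟩ heq
        ext x
        by_cases hxu : x = u
        · subst hxu; simp [hu₁, hu₂]
        by_cases hxn : G.Adj u x
        · simp [hnbru D₁ ⟨hD₁, hu₁⟩ x hxn, hnbru D₂ ⟨hD₂, hu₂⟩ x hxn]
        · have hx : x ∈ ((insert u (G.neighborSet u))ᶜ : Set V) := by
            simp [hxu, hxn]
          exact Set.ext_iff.mp heq ⟨x, hx⟩
      · have hsub : ({u, v} : Set V) ⊆ insert u (G.neighborSet u) := by
          rintro x (rfl | rfl)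
          · exact Set.mem_insert _ _
          · exact Set.mem_insert_of_mem _ hadj.symm
        have h2le : 2 ≤ (insert u (G.neighborSet u)).ncard := by
          rw [← Set.ncard_pair (Ne.symm hne)]
          exact Set.ncard_le_ncard hsub (Set.toFinite _)
        have e1 : (insert u (G.neighborSet u)).ncard
            + ((insert u (G.neighborSet u))ᶜ).ncard = Fintype.card V := by
          rw [Set.ncard_add_ncard_compl, Nat.card_eq_fintype_card]
        rw [Nat.card_coe_set_eq]
        omega
    calc (S.ncard : ℝ) ≤ (Sv.ncard : ℝ) + (Su.ncard : ℝ) := hbound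
    _ ≤ 2 ^ (((Fintype.card V : ℝ) - 2) / 2) + 2 ^ (((Fintype.card V : ℝ) - 2) / 2) :=
        add_le_add hvbound hubound
    _ = 2 ^ (((Fintype.card V : ℝ) - 2) / 2 + 1) := by
        rw [Real.rpow_add (by norm_num), Real.rpow_one]; ring
    _ = 2 ^ ((Fintype.card V : ℝ) / 2) := by
        congr 1; ring

lemma matching_adj {k : ℕ} (a b : Fin k × Bool) :
    (matchingGraph k).Adj a b ↔ a.1 = b.1 ∧ a ≠ b := by
  constructor
  · rintro ⟨hne, h | h⟩
    exacts [⟨h, hne⟩, ⟨h.symm, hne⟩]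
  · rintro ⟨h, hne⟩
    exact ⟨hne, Or.inl h⟩

lemma matching_char {k : ℕ} (D : Set (Fin k × Bool)) :
    IsIndepDom (matchingGraph k) D ↔ ∀ i : Fin k, ((i, true) ∈ D ↔ (i, false) ∉ D) := by
  constructor
  · rintro ⟨hind, hdom⟩ i
    constructor
    · intro ht hf
      exact hind _ ht _ hf ((matching_adj _ _).mpr ⟨rfl, by simp⟩)
    · intro hf
      by_contra ht
      obtain ⟨⟨j, bx⟩, hxD, hadj⟩ := hdom (i, true) ht
      rw [matching_adj] at hadj
      obtain ⟨h1, h2⟩ := hadj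
      simp only [] at h1
      subst h1
      cases bx
      · exact hf hxD
      · exact h2 rfl
  · intro h
    constructor
    · rintro x hx y hy hadj
      rw [matching_adj] at hadj
      obtain ⟨h1, h2⟩ := hadj
      have := h x.1
      rcases x with ⟨i, bx⟩
      rcases y with ⟨j, by'⟩
      simp only at h1
      subst h1
      cases bx <;> cases by' <;> simp_all
    · rintro ⟨i, b⟩ hx
      cases b
      · exact ⟨(i, true), (h i).mpr hx, (matching_adj _ _).mpr ⟨rfl, by simp⟩⟩
      · refine ⟨(i, false), ?_, (matching_adj _ _).mpr ⟨rfl, by simp⟩⟩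
        by_contra hf
        exact hx ((h i).mpr hf)
  
lemma matching_count (k : ℕ) :
    Set.ncard {D : Set (Fin k × Bool) | IsIndepDom (matchingGraph k) D} = 2 ^ k := by
  classical
  have hset : {D : Set (Fin k × Bool) | IsIndepDom (matchingGraph k) D}
      = (fun g : Fin k → Bool => {x : Fin k × Bool | x.2 = g x.1}) '' Set.univ := by
    ext D
    simp only [Set.mem_setOf_eq, Set.image_univ, Set.mem_range, matching_char]
    constructor
    · intro h
      refine ⟨fun i => if (i, true) ∈ D then true else false, ?_⟩
      ext ⟨i, b⟩
      by_cases hm : (i, true) ∈ D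
      · cases b <;> simp [hm, (h i).mp hm]
      · have hf : (i, false) ∈ D := by
          by_contra hf
          exact hm ((h i).mpr hf)
        cases b <;> simp [hm, hf]
    · rintro ⟨g, rfl⟩ i
      cases hg : g i <;> simp [hg]
  have hinj : Function.Injective (fun g : Fin k → Bool => {x : Fin k × Bool | x.2 = g x.1}) := by
    intro g₁ g₂ heq
    funext i
    simp only [] at heq
    have h1 : (i, g₁ i) ∈ {x : Fin k × Bool | x.2 = g₁ x.1} := rfl
    rw [heq] at h1
    exact h1
  rw [hset, Set.ncard_image_of_injective _ hinj, Set.ncard_univ]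
  simp [Nat.card_eq_fintype_card]

theorem forest_indep_dom_bound :
    (∀ (V : Type) [Fintype V] (G : SimpleGraph V), G.IsAcyclic →
      (Set.ncard {D : Set V | IsIndepDom G D} : ℝ) ≤
        2 ^ ((Fintype.card V : ℝ) / 2)) ∧
    (∀ k : ℕ, Fintype.card (Fin k × Bool) = 2 * k ∧
      Set.ncard {D : Set (Fin k × Bool) | IsIndepDom (matchingGraph k) D} = 2 ^ k) := by
  constructor
  · intro V _ G hac
    exact count_le (Fintype.card V) V G le_rfl hac
  · intro k
    exact ⟨by simp [mul_comm], matching_count k⟩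
end

section
/- Every forest on n vertices has at most 2^{n/2} perfect codes, with equality for disjoint unions of edges. -/
/-!
A forest with an edge has a leaf `v`; if `u` is its neighbour, every perfect code contains `v`
or `u`. A perfect code containing a vertex `w` restricts to a perfect code of the forest obtained
by deleting `w` and its neighbours, and is determined by that restriction. When `w` is `v` or `u`
at least two vertices are deleted, so the number `c n` of perfect codes of a forest on `n`
vertices satisfies `c n ≤ 2 c (n - 2)`, whence `c n ≤ √2 ^ n`. In a disjoint union of edges a
perfect code is a choice of one endpoint of each edge.
-/

/-- `D` is a perfect code of `G`: no vertex of `D` has a neighbor in `D`, and every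
vertex not in `D` has exactly one neighbor in `D`. -/
def IsPerfectCode {V : Type*} (G : SimpleGraph V) (D : Set V) : Prop :=
  (∀ v ∈ D, (G.neighborSet v ∩ D).ncard = 0) ∧
    ∀ v ∉ D, (G.neighborSet v ∩ D).ncard = 1

open SimpleGraph Set

namespace SimpleGraph

variable {V : Type*} [Finite V] {G : SimpleGraph V}

lemma IsAcyclic.exists_existsUnique_adj (hG : G.IsAcyclic) {a b : V}
    (hab : G.Adj a b) : ∃ v, ∃! u, G.Adj v u := by
  have : Nonempty V := ⟨a⟩
  obtain ⟨u, v, p, hp, hmax⟩ := Walk.exists_isPath_forall_isPath_length_le_length G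
  have hnil : ¬p.Nil := by
    rw [Walk.not_nil_iff_lt_length]
    exact hmax a b (.cons hab .nil) (by simp [hab.ne])
  refine ⟨u, p.snd, p.adj_snd hnil, fun w hadj => hG.eq_snd_of_adj_start hp hadj ?_⟩
  by_contra hw
  simpa using hmax _ _ (p.cons hadj.symm) (hp.cons hw)

lemma ncard_compl_insert_neighborSet_add_two_le {w u : V} (h : G.Adj w u) :
    (insert w (G.neighborSet w))ᶜ.ncard + 2 ≤ Nat.card V := by
  have hpair : 2 ≤ (insert w (G.neighborSet w)).ncard := by
    rw [← ncard_pair h.ne]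
    exact ncard_le_ncard (insert_subset_insert (singleton_subset_iff.mpr h))
  have := ncard_add_ncard_compl (insert w (G.neighborSet w))
  omega

end SimpleGraph

section PerfectCode

variable {V : Type*} {G : SimpleGraph V} {D : Set V}

lemma isPerfectCode_iff [Finite V] : IsPerfectCode G D ↔
    (∀ v ∈ D, ∀ w, G.Adj v w → w ∉ D) ∧ ∀ v ∉ D, ∃! w, G.Adj v w ∧ w ∈ D := by
  simp only [IsPerfectCode, ncard_eq_zero (toFinite _), ncard_eq_one, eq_empty_iff_forall_notMem,
    eq_singleton_iff_unique_mem, mem_inter_iff, mem_neighborSet, not_and, ExistsUnique]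

namespace IsPerfectCode

variable [Finite V]

lemma not_mem_of_adj (hD : IsPerfectCode G D) {v w : V} (hv : v ∈ D) (hvw : G.Adj v w) :
    w ∉ D :=
  (isPerfectCode_iff.mp hD).1 v hv w hvw

lemma existsUnique_adj_mem (hD : IsPerfectCode G D) {v : V} (hv : v ∉ D) :
    ∃! w, G.Adj v w ∧ w ∈ D :=
  (isPerfectCode_iff.mp hD).2 v hv

lemma mem_or_mem_of_forall_adj_eq (hD : IsPerfectCode G D) {v u : V}
    (hu : ∀ w, G.Adj v w → w = u) : v ∈ D ∨ u ∈ D := by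
  refine or_iff_not_imp_left.mpr fun hv => ?_
  obtain ⟨w, ⟨hvw, hw⟩, -⟩ := hD.existsUnique_adj_mem hv
  exact hu w hvw ▸ hw

lemma induce_compl_insert_neighborSet (hD : IsPerfectCode G D) {w : V} (hw : w ∈ D) :
    IsPerfectCode (G.induce (insert w (G.neighborSet w))ᶜ) (Subtype.val ⁻¹' D) := by
  refine isPerfectCode_iff.mpr ⟨fun x hx y hxy => hD.not_mem_of_adj hx hxy, fun x hx => ?_⟩
  obtain ⟨z, ⟨hxz, hz⟩, hzuniq⟩ := hD.existsUnique_adj_mem hx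
  have hzS : z ∈ (insert w (G.neighborSet w))ᶜ := by
    rintro (rfl | hwz)
    · exact x.2 (Or.inr hxz.symm)
    · exact hD.not_mem_of_adj hw hwz hz
  exact ⟨⟨z, hzS⟩, ⟨hxz, hz⟩, fun y hy => Subtype.ext (hzuniq y hy)⟩

lemma eq_of_preimage_eq {D' : Set V} (hD : IsPerfectCode G D) (hD' : IsPerfectCode G D')
    {w : V} (hw : w ∈ D) (hw' : w ∈ D')
    (h : (Subtype.val ⁻¹' D : Set ↥(insert w (G.neighborSet w))ᶜ) = Subtype.val ⁻¹' D') :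
    D = D' := by
  ext x
  by_cases hx : x ∈ insert w (G.neighborSet w)
  · rcases hx with rfl | hwx
    · exact iff_of_true hw hw'
    · exact iff_of_false (hD.not_mem_of_adj hw hwx) (hD'.not_mem_of_adj hw' hwx)
  · exact Set.ext_iff.mp h ⟨x, hx⟩

end IsPerfectCode

variable [Finite V]

lemma isPerfectCode_bot_iff : IsPerfectCode (⊥ : SimpleGraph V) D ↔ D = univ := by
  simp [isPerfectCode_iff, eq_univ_iff_forall]

lemma ncard_setOf_isPerfectCode_bot : {D | IsPerfectCode (⊥ : SimpleGraph V) D}.ncard = 1 := by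
  simp [isPerfectCode_bot_iff]

lemma isPerfectCode_iff_of_adj_iff {σ : V → V} (hσ : ∀ v w, G.Adj v w ↔ w = σ v) :
    IsPerfectCode G D ↔ ∀ v, v ∈ D ↔ σ v ∉ D := by
  simp only [isPerfectCode_iff, hσ, forall_eq, ExistsUnique, and_imp]
  grind

lemma ncard_setOf_isPerfectCode_mem_le (w : V) :
    {D | IsPerfectCode G D ∧ w ∈ D}.ncard ≤
      {D' | IsPerfectCode (G.induce (insert w (G.neighborSet w))ᶜ) D'}.ncard :=
  ncard_le_ncard_of_injOn (Subtype.val ⁻¹' ·)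
    (fun _ hD => hD.1.induce_compl_insert_neighborSet hD.2)
    (fun _ hD _ hD' h => hD.1.eq_of_preimage_eq hD'.1 hD.2 hD'.2 h)

end PerfectCode

lemma sqrt_two_pow_le_div_two {m n : ℕ} (h : m + 2 ≤ n) : √2 ^ m ≤ √2 ^ n / 2 := by
  rw [le_div_iff₀ two_pos]
  calc √2 ^ m * 2 = √2 ^ (m + 2) := by rw [pow_add, Real.sq_sqrt zero_le_two]
    _ ≤ √2 ^ n := pow_le_pow_right₀ (Real.one_le_sqrt.mpr one_le_two) h

theorem SimpleGraph.IsAcyclic.ncard_setOf_isPerfectCode_le {V : Type*} [Finite V]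
    {G : SimpleGraph V} (hG : G.IsAcyclic) :
    ({D | IsPerfectCode G D}.ncard : ℝ) ≤ √2 ^ Nat.card V := by
  induction hn : Nat.card V using Nat.strong_induction_on generalizing V with
  | _ n ih =>
  by_cases hbot : G = ⊥
  · subst hbot
    simpa [ncard_setOf_isPerfectCode_bot] using one_le_pow₀ (Real.one_le_sqrt.mpr one_le_two)
  obtain ⟨a, b, hab⟩ := ne_bot_iff_exists_adj.mp hbot
  obtain ⟨v, u, hvu, hu⟩ := hG.exists_existsUnique_adj hab
  have hcover : {D | IsPerfectCode G D} ⊆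
      {D | IsPerfectCode G D ∧ v ∈ D} ∪ {D | IsPerfectCode G D ∧ u ∈ D} := fun D hD =>
    (hD.mem_or_mem_of_forall_adj_eq hu).imp (⟨hD, ·⟩) (⟨hD, ·⟩)
  have hhalf {w x : V} (hwx : G.Adj w x) :
      ({D | IsPerfectCode G D ∧ w ∈ D}.ncard : ℝ) ≤ √2 ^ n / 2 := by
    have hcard := G.ncard_compl_insert_neighborSet_add_two_le hwx
    calc ({D | IsPerfectCode G D ∧ w ∈ D}.ncard : ℝ)
        ≤ {D' | IsPerfectCode (G.induce (insert w (G.neighborSet w))ᶜ) D'}.ncard := by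
          exact_mod_cast ncard_setOf_isPerfectCode_mem_le w
      _ ≤ √2 ^ (insert w (G.neighborSet w))ᶜ.ncard :=
          ih _ (by omega) (hG.induce _) (Nat.card_coe_set_eq _)
      _ ≤ √2 ^ n / 2 := sqrt_two_pow_le_div_two (by omega)
  calc ({D | IsPerfectCode G D}.ncard : ℝ)
      ≤ {D | IsPerfectCode G D ∧ v ∈ D}.ncard + {D | IsPerfectCode G D ∧ u ∈ D}.ncard := by
        exact_mod_cast (ncard_le_ncard hcover).trans (ncard_union_le _ _)
    _ ≤ √2 ^ n / 2 + √2 ^ n / 2 := add_le_add (hhalf hvu) (hhalf hvu.symm)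
    _ = √2 ^ n := add_halves _

lemma matchingGraph_adj {k : ℕ} {a b : Fin k × Bool} :
    (matchingGraph k).Adj a b ↔ b = (a.1, !a.2) := by
  obtain ⟨i, x⟩ := a
  obtain ⟨j, y⟩ := b
  cases x <;> cases y <;> simp [matchingGraph, eq_comm]

lemma setOf_isPerfectCode_matchingGraph (k : ℕ) :
    {D | IsPerfectCode (matchingGraph k) D} = range fun g : Fin k → Bool => {p | p.2 = g p.1} := by
  ext D
  simp only [mem_ofPred_eq, mem_range, isPerfectCode_iff_of_adj_iff fun _ _ => matchingGraph_adj]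
  constructor
  · classical
    intro hD
    refine ⟨fun i => decide ((i, true) ∈ D), Set.ext fun ⟨i, x⟩ => ?_⟩
    cases x <;> simp [hD (i, false)]
  · rintro ⟨g, rfl⟩ ⟨i, x⟩
    cases x <;> cases g i <;> simp

lemma ncard_setOf_isPerfectCode_matchingGraph (k : ℕ) :
    {D | IsPerfectCode (matchingGraph k) D}.ncard = 2 ^ k := by
  rw [setOf_isPerfectCode_matchingGraph, ncard_range_of_injective]
  · simp
  · exact fun g g' h => funext fun i => (Set.ext_iff.mp h (i, g i)).mp rfl

theorem forest_perfect_code_bound :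
    (∀ (V : Type) [Fintype V] (G : SimpleGraph V), G.IsAcyclic →
      (Set.ncard {D : Set V | IsPerfectCode G D} : ℝ) ≤
        2 ^ ((Fintype.card V : ℝ) / 2)) ∧
    (∀ k : ℕ, Fintype.card (Fin k × Bool) = 2 * k ∧
      Set.ncard {D : Set (Fin k × Bool) | IsPerfectCode (matchingGraph k) D} = 2 ^ k) := by
  refine ⟨fun V _ G hG => ?_,
    fun k => ⟨by simp [mul_comm], ncard_setOf_isPerfectCode_matchingGraph k⟩⟩
  have hpow : (2 : ℝ) ^ ((Fintype.card V : ℝ) / 2) = √2 ^ Fintype.card V := by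
    rw [Real.sqrt_eq_rpow, ← Real.rpow_natCast, ← Real.rpow_mul zero_le_two]
    ring_nf
  rw [hpow, ← Nat.card_eq_fintype_card]
  exact hG.ncard_setOf_isPerfectCode_le
end

section
/- Let G be the tree consisting of a root s joined to l vertices s₁,…,s_l, where each sᵢ is joined to kᵢ, and each kᵢ is joined to 4 leaves (so G has 6l+1 vertices). Then the number of total perfect dominating sets of G is exactly 4^{l-1}·l, and none of them contains s. -/
/-- The tree with root `s = none`, children `sᵢ = some (i, none)`, each `sᵢ` joined to
`kᵢ = some (i, some none)`, and each `kᵢ` joined to 4 leaves `some (i, some (some j))`. -/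
def brushTree (l : ℕ) : SimpleGraph (Option (Fin l × Option (Option (Fin 4)))) :=
  SimpleGraph.fromRel (fun a b =>
    (a = none ∧ ∃ i : Fin l, b = some (i, none)) ∨
    (∃ i : Fin l, a = some (i, none) ∧ b = some (i, some none)) ∨
    (∃ (i : Fin l) (j : Fin 4), a = some (i, some none) ∧ b = some (i, some (some j))))

/-- `D` is a total perfect dominating set of `G`: every vertex has exactly one neighbor
in `D`. -/
def IsTotalPerfectDom {V : Type*} (G : SimpleGraph V) (D : Set V) : Prop :=
  ∀ v : V, (G.neighborSet v ∩ D).ncard = 1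

/-! Each `kᵢ` is the only neighbour of its leaves, so it lies in `D`. Hence the root does not: it
would be a second neighbour of `sᵢ` in `D`. The root's neighbour in `D` is a single spoke `sᵢ₀`, and
every other `kᵢ` has its neighbour in `D` among its four leaves. Thus total perfect dominating sets
correspond to maps `Fin l → Option (Fin 4)` taking the value `none` exactly once, and there are
`l · 4 ^ (l - 1)` of those. -/

section

variable {ι α : Type*} [Fintype ι] [DecidableEq ι] [Fintype α]

theorem card_fun_option_eq_none_iff_eq (i : ι) :
    Fintype.card {g : ι → Option α // ∀ j, g j = none ↔ j = i} =
      Fintype.card α ^ (Fintype.card ι - 1) := by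
  have hne (j : ι) (hj : j ≠ i) :
      Fintype.card {o : Option α // o = none ↔ j = i} = Fintype.card α := by
    simp only [hj, iff_false]
    rw [Fintype.card_subtype_compl, Fintype.card_option, Fintype.card_subtype_eq,
      Nat.add_sub_cancel]
  rw [Fintype.card_congr (Equiv.subtypePiEquivPi (p := fun j (o : Option α) => o = none ↔ j = i)),
    Fintype.card_pi, Fintype.prod_eq_mul_prod_compl i,
    Finset.prod_congr rfl fun j hj => hne j (by simpa using hj)]
  simp [Finset.card_compl]

variable (ι α) in
noncomputable def existsUniqueEqNoneEquivSigma :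
    {g : ι → Option α // ∃! i, g i = none} ≃
      Σ i, {g : ι → Option α // ∀ j, g j = none ↔ j = i} where
  toFun g := ⟨g.2.exists.choose, g.1, fun _ => ⟨fun h => g.2.unique h g.2.exists.choose_spec,
    fun h => h ▸ g.2.exists.choose_spec⟩⟩
  invFun g := ⟨g.2.1, g.1, (g.2.2 g.1).2 rfl, fun j hj => (g.2.2 j).1 hj⟩
  left_inv _ := rfl
  right_inv g :=
    Sigma.subtype_ext ((g.2.2 _).1 (Exists.choose_spec (p := fun i => g.2.1 i = none) _)) rfl

theorem card_fun_option_existsUnique_eq_none :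
    Nat.card {g : ι → Option α // ∃! i, g i = none} =
      Fintype.card ι * Fintype.card α ^ (Fintype.card ι - 1) := by
  simp [Nat.card_congr (existsUniqueEqNoneEquivSigma ι α), card_fun_option_eq_none_iff_eq]

end

theorem isTotalPerfectDom_iff_existsUnique {V : Type*} {G : SimpleGraph V} {D : Set V} :
    IsTotalPerfectDom G D ↔ ∀ v, ∃! u, G.Adj v u ∧ u ∈ D :=
  forall_congr' fun _ => Set.ncard_eq_one.trans Set.singleton_iff_unique_mem

namespace BrushTree

variable {l : ℕ}

abbrev Vertex (l : ℕ) := Option (Fin l × Option (Option (Fin 4)))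

def root : Vertex l := none
def s (i : Fin l) : Vertex l := some (i, none)
def k (i : Fin l) : Vertex l := some (i, some none)
def leaf (i : Fin l) (j : Fin 4) : Vertex l := some (i, some (some j))

variable {i : Fin l} {j : Fin 4} {u : Vertex l}

lemma adj_root : (brushTree l).Adj root u ↔ ∃ i, u = s i := by
  rcases u with _ | ⟨_, _ | _ | _⟩ <;> simp [brushTree, root, s]

lemma adj_s : (brushTree l).Adj (s i) u ↔ u = root ∨ u = k i := by
  rcases u with _ | ⟨_, _ | _ | _⟩ <;> simp [brushTree, root, s, k, eq_comm]

lemma adj_k : (brushTree l).Adj (k i) u ↔ u = s i ∨ ∃ j, u = leaf i j := by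
  rcases u with _ | ⟨_, _ | _ | _⟩ <;> simp [brushTree, s, k, leaf, eq_comm]

lemma adj_leaf : (brushTree l).Adj (leaf i j) u ↔ u = k i := by
  rcases u with _ | ⟨_, _ | _ | _⟩ <;> simp [brushTree, k, leaf, eq_comm]

def dominatingSet (g : Fin l → Option (Fin 4)) : Set (Vertex l)
  | none => False
  | some (i, none) => g i = none
  | some (_, some none) => True
  | some (i, some (some j)) => g i = some j

variable {g : Fin l → Option (Fin 4)}

lemma root_notMem_dominatingSet : root ∉ dominatingSet g := id

lemma s_mem_dominatingSet : s i ∈ dominatingSet g ↔ g i = none := Iff.rfl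

lemma k_mem_dominatingSet : k i ∈ dominatingSet g := trivial

lemma leaf_mem_dominatingSet : leaf i j ∈ dominatingSet g ↔ g i = some j := Iff.rfl

lemma dominatingSet_injective : Function.Injective (dominatingSet (l := l)) :=
  fun _ _ h => funext fun i => Option.ext fun j => Set.ext_iff.1 h (leaf i j)

lemma isTotalPerfectDom_dominatingSet (hg : ∃! i, g i = none) :
    IsTotalPerfectDom (brushTree l) (dominatingSet g) := by
  rw [isTotalPerfectDom_iff_existsUnique]
  rintro (_ | ⟨i, _ | _ | j⟩)
  · obtain ⟨i₀, hi₀, hunique⟩ := hg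
    refine ⟨s i₀, ⟨adj_root.2 ⟨i₀, rfl⟩, hi₀⟩, ?_⟩
    rintro u ⟨hu, hmem⟩
    obtain ⟨i, rfl⟩ := adj_root.1 hu
    rw [hunique i hmem]
  · refine ⟨k i, ⟨adj_s.2 (Or.inr rfl), k_mem_dominatingSet⟩, ?_⟩
    rintro u ⟨hu, hmem⟩
    rcases adj_s.1 hu with rfl | rfl
    · exact absurd hmem root_notMem_dominatingSet
    · rfl
  · rcases hgi : g i with _ | j
    · refine ⟨s i, ⟨adj_k.2 (Or.inl rfl), hgi⟩, ?_⟩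
      rintro u ⟨hu, hmem⟩
      rcases adj_k.1 hu with rfl | ⟨j, rfl⟩
      · rfl
      · exact absurd ((leaf_mem_dominatingSet.1 hmem).symm.trans hgi) nofun
    · refine ⟨leaf i j, ⟨adj_k.2 (Or.inr ⟨j, rfl⟩), hgi⟩, ?_⟩
      rintro u ⟨hu, hmem⟩
      rcases adj_k.1 hu with rfl | ⟨j', rfl⟩
      · exact absurd ((s_mem_dominatingSet.1 hmem).symm.trans hgi) nofun
      · rw [Option.some.inj ((leaf_mem_dominatingSet.1 hmem).symm.trans hgi)]
  · refine ⟨k i, ⟨adj_leaf.2 rfl, k_mem_dominatingSet⟩, fun u ⟨hu, _⟩ => adj_leaf.1 hu⟩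

lemma exists_eq_dominatingSet_of_isTotalPerfectDom {D : Set (Vertex l)}
    (hD : IsTotalPerfectDom (brushTree l) D) :
    ∃ g : Fin l → Option (Fin 4), (∃! i, g i = none) ∧ D = dominatingSet g := by
  rw [isTotalPerfectDom_iff_existsUnique] at hD
  have hk (i : Fin l) : k i ∈ D := by
    obtain ⟨u, ⟨hu, hmem⟩, -⟩ := hD (leaf i 0)
    rwa [adj_leaf.1 hu] at hmem
  have hroot : root ∉ D := fun hmem => by
    obtain ⟨u, ⟨hu, -⟩, -⟩ := hD root
    obtain ⟨i, rfl⟩ := adj_root.1 hu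
    exact absurd ((hD (s i)).unique ⟨adj_s.2 (Or.inl rfl), hmem⟩ ⟨adj_s.2 (Or.inr rfl), hk i⟩) nofun
  have hlabel (i : Fin l) :
      ∃ o : Option (Fin 4), (s i ∈ D ↔ o = none) ∧ ∀ j, (leaf i j ∈ D ↔ o = some j) := by
    obtain ⟨u, ⟨hu, hmem⟩, hunique⟩ := hD (k i)
    have hadj_leaf (j) : (brushTree l).Adj (k i) (leaf i j) := adj_k.2 (Or.inr ⟨j, rfl⟩)
    rcases adj_k.1 hu with rfl | ⟨j, rfl⟩
    · refine ⟨none, iff_of_true hmem rfl, fun j => iff_of_false (fun h => ?_) nofun⟩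
      exact absurd (hunique _ ⟨hadj_leaf j, h⟩) nofun
    · refine ⟨some j, iff_of_false (fun h => ?_) nofun, fun j' => ⟨fun h => ?_, ?_⟩⟩
      · exact absurd (hunique _ ⟨adj_k.2 (Or.inl rfl), h⟩) nofun
      · cases hunique _ ⟨hadj_leaf j', h⟩
        rfl
      · rintro ⟨⟩
        exact hmem
  choose g hs hleaf using hlabel
  refine ⟨g, ?_, ?_⟩
  · obtain ⟨u, ⟨hu, hmem⟩, hunique⟩ := hD root
    obtain ⟨i₀, rfl⟩ := adj_root.1 hu
    refine ⟨i₀, (hs i₀).1 hmem, fun i hi => ?_⟩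
    cases hunique (s i) ⟨adj_root.2 ⟨i, rfl⟩, (hs i).2 hi⟩
    rfl
  · ext (_ | ⟨i, _ | _ | j⟩)
    · exact iff_of_false hroot root_notMem_dominatingSet
    · exact hs i
    · exact iff_of_true (hk i) k_mem_dominatingSet
    · exact hleaf i j

lemma setOf_isTotalPerfectDom :
    {D | IsTotalPerfectDom (brushTree l) D} = dominatingSet '' {g | ∃! i, g i = none} := by
  ext D
  constructor
  · intro hD
    obtain ⟨g, hg, rfl⟩ := exists_eq_dominatingSet_of_isTotalPerfectDom hD
    exact ⟨g, hg, rfl⟩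
  · rintro ⟨g, hg, rfl⟩
    exact isTotalPerfectDom_dominatingSet hg

end BrushTree

theorem brushTree_total_perfect_dom_general (l : ℕ) :
    Fintype.card (Option (Fin l × Option (Option (Fin 4)))) = 6 * l + 1 ∧
    Set.ncard {D : Set (Option (Fin l × Option (Option (Fin 4)))) |
      IsTotalPerfectDom (brushTree l) D} = 4 ^ (l - 1) * l ∧
    ∀ D : Set (Option (Fin l × Option (Option (Fin 4)))),
      IsTotalPerfectDom (brushTree l) D → none ∉ D := by
  refine ⟨by simp; ring, ?_, fun D hD => ?_⟩
  · rw [BrushTree.setOf_isTotalPerfectDom,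
      Set.ncard_image_of_injective _ BrushTree.dominatingSet_injective, ← Nat.card_coe_set_eq,
      Set.coe_ofPred, card_fun_option_existsUnique_eq_none]
    simp [mul_comm]
  · obtain ⟨g, -, rfl⟩ := BrushTree.exists_eq_dominatingSet_of_isTotalPerfectDom hD
    exact BrushTree.root_notMem_dominatingSet

theorem brushTree_total_perfect_dom (l : ℕ) (hl : 0 < l) :
    Fintype.card (Option (Fin l × Option (Option (Fin 4)))) = 6 * l + 1 ∧
    Set.ncard {D : Set (Option (Fin l × Option (Option (Fin 4)))) |
      IsTotalPerfectDom (brushTree l) D} = 4 ^ (l - 1) * l ∧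
    ∀ D : Set (Option (Fin l × Option (Option (Fin 4)))),
      IsTotalPerfectDom (brushTree l) D → none ∉ D :=
  brushTree_total_perfect_dom_general l
end
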